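/- For a, b > 0 and real ν, ∫_0^∞ t^{ν−1} exp(−a/t − b t) dt = 2 (a/b)^{ν/2} K_ν(2√(ab)), where K_ν is the modified Bessel function of the second kind. -/

import Mathlib

open Real MeasureTheory

/-- Modified Bessel function of the second kind, via its integral representation
`K_ν(z) = ∫_0^∞ e^{-z cosh t} cosh(ν t) dt`. -/
noncomputable def besselK (nu z : ℝ) : ℝ :=
  ∫ t in Set.Ioi (0 : ℝ), Real.exp (-z * Real.cosh t) * Real.cosh (nu * t)

/-!
Substituting `t = √(a/b) eᵘ` turns the integrand into `(a/b)^(ν/2) e^(νu - 2√(ab) cosh u)`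
on all of `ℝ`. Averaging this with its image under `u ↦ -u` replaces `e^(νu)` by `cosh (νu)`,
and the resulting even integrand integrates over `ℝ` to twice its integral over `(0, ∞)`,
which is `2 K_ν`.
-/

open Set

theorem integral_comp_const_mul_exp {E : Type*} [NormedAddCommGroup E] [NormedSpace ℝ E]
    {c : ℝ} (hc : 0 < c) (g : ℝ → E) :
    ∫ u, (c * exp u) • g (c * exp u) = ∫ t in Ioi 0, g t := by
  have himage : (fun u ↦ c * exp u) '' univ = Ioi 0 := by
    rw [image_univ, show (fun u ↦ c * exp u) = (c * ·) ∘ exp from rfl, range_comp, range_exp,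
      image_mul_left_Ioi hc, mul_zero]
  have hinj : InjOn (fun u ↦ c * exp u) univ := fun x _ y _ h ↦
    exp_injective (mul_left_cancel₀ hc.ne' h)
  rw [← himage, integral_image_eq_integral_abs_deriv_smul MeasurableSet.univ
    (fun u _ ↦ ((hasDerivAt_exp u).const_mul c).hasDerivWithinAt) hinj, setIntegral_univ]
  simp_rw [abs_of_pos (mul_pos hc (exp_pos _))]

theorem integrable_exp_neg_mul_sq_add_mul {b : ℝ} (hb : 0 < b) (c : ℝ) :
    Integrable fun x : ℝ ↦ exp (-b * x ^ 2 + c * x) := by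
  have := (integrable_cexp_quadratic (b := b) (by simpa using hb) c 0).norm
  simp only [Complex.norm_exp] at this
  convert this using 3 with x
  simp [← Complex.ofReal_pow]

theorem sq_div_four_le_cosh (u : ℝ) : u ^ 2 / 4 ≤ cosh u := by
  have hexp := quadratic_le_exp_of_nonneg (abs_nonneg u)
  rw [← cosh_abs, cosh_eq, ← sq_abs u]
  nlinarith [exp_pos (-|u|), abs_nonneg u]

theorem integrable_exp_mul_sub_mul_cosh (nu : ℝ) {z : ℝ} (hz : 0 < z) :
    Integrable fun u ↦ exp (nu * u - z * cosh u) := by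
  refine (integrable_exp_neg_mul_sq_add_mul (div_pos hz four_pos) nu).mono' (by fun_prop) ?_
  refine Filter.Eventually.of_forall fun u ↦ ?_
  rw [norm_of_nonneg (exp_pos _).le, exp_le_exp]
  nlinarith [sq_div_four_le_cosh u]

theorem integral_exp_mul_sub_mul_cosh (nu : ℝ) {z : ℝ} (hz : 0 < z) :
    ∫ u, exp (nu * u - z * cosh u) = 2 * besselK nu z := by
  have hsymm : ∫ u, exp (-nu * u - z * cosh u) = ∫ u, exp (nu * u - z * cosh u) := by
    rw [← integral_neg_eq_self]
    simp only [mul_neg, neg_mul, neg_neg, cosh_neg]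
  have hcosh_abs (u : ℝ) : cosh (nu * |u|) = cosh (nu * u) := by
    rcases abs_choice u with h | h <;> simp [h]
  calc ∫ u, exp (nu * u - z * cosh u)
      = ((∫ u, exp (nu * u - z * cosh u)) + ∫ u, exp (-nu * u - z * cosh u)) / 2 := by
        rw [hsymm, add_self_div_two]
    _ = ∫ u, exp (-z * cosh |u|) * cosh (nu * |u|) := by
        rw [← integral_add (integrable_exp_mul_sub_mul_cosh nu hz)
          (integrable_exp_mul_sub_mul_cosh (-nu) hz), ← integral_div]
        congr 1 with u
        rw [cosh_abs, hcosh_abs, cosh_eq (nu * u)]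
        simp only [sub_eq_add_neg, exp_add, neg_mul]
        ring
    _ = 2 * besselK nu z := integral_comp_abs (f := fun t ↦ exp (-z * cosh t) * cosh (nu * t))

theorem const_mul_exp_mul_rpow_mul_exp_eq {c : ℝ} (hc : 0 < c) (s nu u : ℝ) :
    c * exp u * ((c * exp u) ^ (nu - 1) * exp (-(s * c) / (c * exp u) - s / c * (c * exp u)))
      = c ^ nu * exp (nu * u - 2 * s * cosh u) := by
  have hexponent : u + u * (nu - 1) + (-(s * c) / (c * exp u) - s / c * (c * exp u))
      = nu * u - 2 * s * cosh u := by
    rw [cosh_eq, exp_neg]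
    field_simp
    ring
  rw [mul_rpow hc.le (exp_pos u).le, ← exp_mul, rpow_sub_one hc.ne', ← hexponent, exp_add,
    exp_add]
  field_simp

theorem integral_rpow_mul_exp_mul_div_eq_besselK {s c : ℝ} (hs : 0 < s) (hc : 0 < c) (nu : ℝ) :
    ∫ t in Ioi 0, t ^ (nu - 1) * exp (-(s * c) / t - s / c * t)
      = 2 * c ^ nu * besselK nu (2 * s) := by
  rw [← integral_comp_const_mul_exp hc]
  simp_rw [smul_eq_mul, const_mul_exp_mul_rpow_mul_exp_eq hc]
  rw [integral_const_mul, integral_exp_mul_sub_mul_cosh nu (by positivity)]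
  ring

theorem integral_rpow_exp_eq_besselK
    (a b nu : ℝ) (ha : 0 < a) (hb : 0 < b) :
    ∫ t in Set.Ioi (0 : ℝ), t ^ (nu - 1) * Real.exp (-a / t - b * t)
      = 2 * (a / b) ^ (nu / 2) * besselK nu (2 * Real.sqrt (a * b)) := by
  have hab : 0 < a / b := div_pos ha hb
  have hmul : √(a * b) * √(a / b) = a := by
    rw [← sqrt_mul (mul_pos ha hb).le, show a * b * (a / b) = a * a by field_simp,
      sqrt_mul_self ha.le]
  have hdiv : √(a * b) / √(a / b) = b := by
    rw [← sqrt_div' _ hab.le, show a * b / (a / b) = b * b by field_simp, sqrt_mul_self hb.le]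
  have hpow : √(a / b) ^ nu = (a / b) ^ (nu / 2) := by
    rw [sqrt_eq_rpow, ← rpow_mul hab.le, one_div_mul_eq_div]
  have key :=
    integral_rpow_mul_exp_mul_div_eq_besselK (sqrt_pos.2 (mul_pos ha hb)) (sqrt_pos.2 hab) nu
  rwa [hmul, hdiv, hpow] at key
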